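/- arXiv:2203.02052 — 6 statements merged into one kernel-verified Lean document; each statement's English description precedes it below -/
import Mathlib

section
/- The number of equivalence classes of 2×κ binary matrices under row and column permutations equals (1/2)(Σ_{i=0}^{⌊κ/2⌋}(κ-2i+1) + binomial(κ+3,3)). -/
/-!
Up to column permutations, a `2 × κ` matrix is the multiset of its `κ` columns, a point of
`Sym (Fin 2 → Bool) κ`, of which there are `C(κ + 3, 3)`. Row permutations then act on these
multisets, and Burnside's lemma for this action of a group of order two says that twice the
number of orbits is `C(κ + 3, 3)` plus the number of multisets fixed by the row swap. Such a
multiset contains the columns `(0, 1)` and `(1, 0)` equally often, say `i` times each, and its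
other `κ - 2i` columns are `(0, 0)` or `(1, 1)`, which leaves `κ - 2i + 1` choices.
-/

/-- Two binary matrices are equivalent if one is obtained from the other by a row
permutation and a column permutation. -/
def matRel (γ κ : ℕ) (A B : Matrix (Fin γ) (Fin κ) Bool) : Prop :=
  ∃ (ρ : Equiv.Perm (Fin γ)) (σ : Equiv.Perm (Fin κ)), ∀ i j, B i j = A (ρ i) (σ j)

open Finset MulAction

theorem exists_perm_comp_eq_iff_map_univ_eq {ι β : Type*} [Fintype ι] (f g : ι → β) :
    (∃ σ : Equiv.Perm ι, g ∘ σ = f) ↔ univ.val.map f = univ.val.map g := by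
  classical
  constructor
  · rintro ⟨σ, rfl⟩
    rw [← Multiset.map_map, Multiset.map_univ_val_equiv]
  · intro h
    have e : ∀ b, {x // f x = b} ≃ {x // g x = b} := fun b =>
      Fintype.equivOfCardEq <| by
        simpa [Fintype.card_subtype, Finset.card_def, Finset.filter_val, Multiset.count_map,
          eq_comm] using congrArg (Multiset.count b) h
    exact ⟨(Equiv.sigmaFiberEquiv f).symm.trans
      ((Equiv.sigmaCongrRight e).trans (Equiv.sigmaFiberEquiv g)),
      funext fun x => (e (f x) ⟨x, rfl⟩).prop⟩

instance Sym.mulAction {G β : Type*} [Monoid G] [MulAction G β] {n : ℕ} :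
    MulAction G (Sym β n) where
  smul g s := s.map (g • ·)
  one_smul s := by
    change s.map _ = s
    simpa only [one_smul] using Sym.map_id' s
  mul_smul g h s := by
    change s.map _ = (s.map _).map _
    simp [Sym.map_map, mul_smul]

theorem Sym.smul_def {G β : Type*} [Monoid G] [MulAction G β] {n : ℕ} (g : G) (s : Sym β n) :
    g • s = s.map (g • ·) := rfl

theorem Sym.map_eq_self_iff {β : Type*} [DecidableEq β] {n : ℕ} {τ : β → β}
    (hτ : Function.Involutive τ) (s : Sym β n) :
    s.map τ = s ↔ ∀ b, (s : Multiset β).count (τ b) = (s : Multiset β).count b := by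
  rw [← Sym.coe_inj, Sym.coe_map, Multiset.ext]
  refine forall_congr' fun b => ?_
  rw [← hτ b, Multiset.count_map_eq_count' τ _ hτ.injective, hτ b]

namespace Matrix

variable {ι α : Type*} {n : ℕ}

def colMultiset (A : Matrix ι (Fin n) α) : Sym (ι → α) n :=
  ⟨univ.val.map fun j i => A i j, by simp⟩

theorem colMultiset_surjective :
    Function.Surjective (colMultiset : Matrix ι (Fin n) α → Sym (ι → α) n) := by
  rintro ⟨s, hs⟩
  induction s using Quotient.inductionOn with
  | h l =>
    obtain rfl : l.length = n := hs
    exact ⟨of fun i j => l[j] i, Sym.ext <| by simp [colMultiset, List.ofFn_getElem]⟩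

end Matrix

attribute [local instance] arrowAction

theorem Equiv.Perm.arrowAction_smul_apply {ι α : Type*} (ρ : Equiv.Perm ι) (v : ι → α)
    (i : ι) : (ρ • v) i = v (ρ⁻¹ i) := rfl

theorem matRel_iff_exists_smul_colMultiset {m n : ℕ} (A B : Matrix (Fin m) (Fin n) Bool) :
    matRel m n A B ↔ ∃ ρ : Equiv.Perm (Fin m), ρ • A.colMultiset = B.colMultiset := by
  rw [inv_surjective.exists]
  refine exists_congr fun ρ => ?_
  have key : ∀ σ : Equiv.Perm (Fin n), (∀ i j, B i j = A (ρ i) (σ j)) ↔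
      ((ρ⁻¹ • ·) ∘ fun j i => A i j) ∘ σ = fun j i => B i j := by
    intro σ
    simp only [funext_iff, Function.comp_apply, Equiv.Perm.arrowAction_smul_apply, inv_inv]
    exact forall_comm.trans (by simp only [eq_comm])
  simp only [exists_congr key, exists_perm_comp_eq_iff_map_univ_eq, Sym.smul_def, ← Sym.coe_inj,
    Sym.coe_map]
  rw [← Multiset.map_map, eq_comm]
  rfl

noncomputable def quotMatRelEquivOrbitRelQuotient (m n : ℕ) :
    Quot (matRel m n) ≃ orbitRel.Quotient (Equiv.Perm (Fin m)) (Sym (Fin m → Bool) n) :=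
  (Quot.congrRight fun A B => by
      rw [matRel_iff_exists_smul_colMultiset, Setoid.ker_def, Function.comp_apply,
        Function.comp_apply, eq_comm, Quotient.eq'', orbitRel_apply, mem_orbit_iff]).trans
    (Setoid.quotientKerEquivOfSurjective _
      (Quotient.mk''_surjective.comp Matrix.colMultiset_surjective))

theorem two_mul_card_orbitRel_quotient_perm_fin_two {X : Type*}
    [MulAction (Equiv.Perm (Fin 2)) X] [Finite X] :
    2 * Nat.card (orbitRel.Quotient (Equiv.Perm (Fin 2)) X) =
      Nat.card X + Nat.card (fixedBy X (Equiv.swap (0 : Fin 2) 1)) := by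
  classical
  have : Fintype X := Fintype.ofFinite X
  have burnside := sum_card_fixedBy_eq_card_orbits_mul_card_group (Equiv.Perm (Fin 2)) X
  rw [show (univ : Finset (Equiv.Perm (Fin 2))) = {1, Equiv.swap 0 1} by decide,
    sum_pair (by decide), Fintype.card_perm, Fintype.card_fin] at burnside
  simp only [← Nat.card_eq_fintype_card, fixedBy_one_eq_univ, Nat.card_univ] at burnside
  rw [burnside, Nat.card_eq_fintype_card (α := orbitRel.Quotient _ _)]
  ring

theorem sum_fin_two_arrow_bool {M : Type*} [AddCommMonoid M] (P : (Fin 2 → Bool) → M) :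
    ∑ v, P v = P ![false, false] + P ![false, true] + P ![true, false] + P ![true, true] := by
  rw [← (finTwoArrowEquiv Bool).symm.sum_comp]
  simp only [finTwoArrowEquiv_symm_apply, Fintype.sum_prod_type, Fintype.sum_bool]
  abel

theorem fin_two_arrow_bool_cases {p : (Fin 2 → Bool) → Prop} (h : ∀ a b, p ![a, b])
    (v : Fin 2 → Bool) : p v := by
  convert h (v 0) (v 1)
  ext i; fin_cases i <;> rfl

theorem card_swap_invariant_counts (κ : ℕ) :
    Nat.card {P : (Fin 2 → Bool) → ℕ //
        ∑ v, P v = κ ∧ ∀ v, P (v ∘ Equiv.swap 0 1) = P v} =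
      ∑ i ∈ range (κ / 2 + 1), (κ - 2 * i + 1) := by
  let T := (range (κ / 2 + 1)).sigma fun i => range (κ - 2 * i + 1)
  have hswap : ∀ a b : Bool, ![a, b] ∘ Equiv.swap (0 : Fin 2) 1 = ![b, a] := by
    intro a b; ext i; fin_cases i <;> rfl
  suffices e : {P : (Fin 2 → Bool) → ℕ //
      ∑ v, P v = κ ∧ ∀ v, P (v ∘ Equiv.swap 0 1) = P v} ≃ T by
    rw [Nat.card_congr e, Nat.card_eq_finsetCard, card_sigma]
    simp
  -- `P` is determined by `i = P ![0, 1] = P ![1, 0]` and `a = P ![0, 0]`,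
  -- as `P ![1, 1] = κ - 2i - a`.
  refine
    { toFun := fun P => ⟨⟨P.1 ![false, true], P.1 ![false, false]⟩, ?_⟩
      invFun := fun x => ⟨fun v =>
        if v 0 = v 1 then (if v 0 then κ - 2 * x.1.1 - x.1.2 else x.1.2) else x.1.1, ?_⟩
      left_inv := ?_
      right_inv := ?_ }
  · obtain ⟨P, hsum, hP⟩ := P
    have := hP ![true, false]
    rw [sum_fin_two_arrow_bool] at hsum
    simp only [hswap, T, mem_sigma, mem_range] at this ⊢
    omega
  · obtain ⟨⟨i, a⟩, hx⟩ := x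
    simp only [T, mem_sigma, mem_range] at hx
    refine ⟨?_, fin_two_arrow_bool_cases fun x y => ?_⟩
    · simp only [sum_fin_two_arrow_bool, Matrix.cons_val_zero, Matrix.cons_val_one,
        Matrix.cons_val_fin_one, ↓reduceIte, Bool.false_eq_true, Bool.true_eq_false]
      omega
    · simp only [hswap]
      cases x <;> cases y <;> simp
  · rintro ⟨P, hsum, hP⟩
    have := hP ![true, false]
    rw [sum_fin_two_arrow_bool] at hsum
    simp only [hswap] at this
    ext v
    induction v using fin_two_arrow_bool_cases with
    | h a b => cases a <;> cases b <;> simp <;> omega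
  · exact fun _ => rfl

theorem card_fixedBy_swap_sym (κ : ℕ) :
    Nat.card (fixedBy (Sym (Fin 2 → Bool) κ) (Equiv.swap (0 : Fin 2) 1)) =
      ∑ i ∈ range (κ / 2 + 1), (κ - 2 * i + 1) := by
  classical
  have hsmul :
      (Equiv.swap (0 : Fin 2) 1 • · : (Fin 2 → Bool) → _) = (· ∘ Equiv.swap 0 1) := by
    ext v i
    simp [Equiv.Perm.arrowAction_smul_apply]
  have hinv : Function.Involutive (· ∘ Equiv.swap (0 : Fin 2) 1 : (Fin 2 → Bool) → _) := by
    intro v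
    ext i
    simp
  rw [← card_swap_invariant_counts]
  refine Nat.card_congr (((Sym.equivNatSumOfFintype _ κ).subtypeEquiv fun s => ?_).trans
    (Equiv.subtypeSubtypeEquivSubtypeInter _ _))
  rw [mem_fixedBy, Sym.smul_def, hsmul, Sym.map_eq_self_iff hinv]
  simp

theorem card_sym_fin_two_arrow_bool (κ : ℕ) :
    Nat.card (Sym (Fin 2 → Bool) κ) = (κ + 3).choose 3 := by
  rw [Nat.card_eq_fintype_card, Sym.card_sym_eq_choose]
  simp only [Fintype.card_pi, Fintype.card_bool, prod_const, card_univ, Fintype.card_fin]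
  rw [show 2 ^ 2 + κ - 1 = κ + 3 by omega]
  exact Nat.choose_symm_add

theorem stmt2_general (κ : ℕ) :
    2 * Nat.card (Quot (matRel 2 κ)) =
      (∑ i ∈ Finset.range (κ / 2 + 1), (κ - 2 * i + 1)) + (κ + 3).choose 3 := by
  rw [Nat.card_congr (quotMatRelEquivOrbitRelQuotient 2 κ),
    two_mul_card_orbitRel_quotient_perm_fin_two, card_sym_fin_two_arrow_bool,
    card_fixedBy_swap_sym, add_comm]

/-- The number of equivalence classes of 2×κ binary matrices under row and
column permutations equals `(1/2)(Σ_{i=0}^{⌊κ/2⌋}(κ-2i+1) + binomial(κ+3,3))`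
(stated multiplied through by 2). -/
theorem stmt2 (κ : ℕ) (hκ : 0 < κ) :
    2 * Nat.card (Quot (matRel 2 κ)) =
      (∑ i ∈ Finset.range (κ / 2 + 1), (κ - 2 * i + 1)) + (κ + 3).choose 3 :=
  stmt2_general κ
end

section
/- The number of equivalence classes of 2×κ binary matrices (under row and column permutations) that contain no all-zero row and no all-one row equals |K_{κ,2}| - 2(κ+1) + 1, where |K_{κ,2}| is the total number of equivalence classes of 2×κ binary matrices. -/
/-- `A` has no all-zero row and no all-one row. -/
def noConstRow {γ κ : ℕ} (A : Matrix (Fin γ) (Fin κ) Bool) : Prop :=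
  (∀ i, ∃ j, A i j = true) ∧ (∀ i, ∃ j, A i j = false)

namespace Stmt10

lemma matRel_equivalence (γ κ : ℕ) : Equivalence (matRel γ κ) := by
  constructor
  · exact fun A => ⟨1, 1, fun i j => rfl⟩
  · rintro A B ⟨ρ, σ, h⟩
    exact ⟨ρ⁻¹, σ⁻¹, fun i j => by
      have := h (ρ⁻¹ i) (σ⁻¹ j); simpa using this.symm⟩
  · rintro A B C ⟨ρ, σ, h⟩ ⟨ρ', σ', h'⟩
    exact ⟨ρ * ρ', σ * σ', fun i j => by rw [h' i j, h]; rfl⟩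

variable {κ : ℕ}

lemma quot_mk_eq_iff (A B : Matrix (Fin 2) (Fin κ) Bool) :
    Quot.mk (matRel 2 κ) A = Quot.mk (matRel 2 κ) B ↔ matRel 2 κ A B :=
  ⟨fun h => ((matRel_equivalence 2 κ).eqvGen_iff).mp (Quot.eqvGen_exact h), Quot.sound⟩

/-- A matrix is bad if it has a constant row. -/
def bad (A : Matrix (Fin 2) (Fin κ) Bool) : Prop :=
  (∃ i, ∀ j, A i j = false) ∨ (∃ i, ∀ j, A i j = true)

lemma bad_iff_not (A : Matrix (Fin 2) (Fin κ) Bool) : bad A ↔ ¬ noConstRow A := by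
  constructor
  · rintro (⟨i, h⟩ | ⟨i, h⟩) ⟨h1, h2⟩
    · obtain ⟨j, hj⟩ := h1 i; rw [h j] at hj; exact absurd hj (by simp)
    · obtain ⟨j, hj⟩ := h2 i; rw [h j] at hj; exact absurd hj (by simp)
  · intro h
    by_cases h1 : ∀ i, ∃ j, A i j = true
    · have h2 : ¬ ∀ i, ∃ j, A i j = false := fun h2 => h ⟨h1, h2⟩
      push_neg at h2
      obtain ⟨i, hi⟩ := h2
      exact Or.inr ⟨i, fun j => by have := hi j; simpa using this⟩
    · push_neg at h1
      obtain ⟨i, hi⟩ := h1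
      exact Or.inl ⟨i, fun j => by have := hi j; simpa using this⟩

/-- Number of `true` entries. -/
def ones (A : Matrix (Fin 2) (Fin κ) Bool) : ℕ :=
  ∑ i, ∑ j, if A i j then 1 else 0

lemma ones_invar {A B : Matrix (Fin 2) (Fin κ) Bool} (h : matRel 2 κ A B) :
    ones B = ones A := by
  obtain ⟨ρ, σ, h⟩ := h
  unfold ones
  calc ∑ i, ∑ j, (if B i j then 1 else 0)
      = ∑ i, ∑ j, (if A (ρ i) (σ j) then (1:ℕ) else 0) := by
        refine Finset.sum_congr rfl fun i _ => Finset.sum_congr rfl fun j _ => by rw [h]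
    _ = ∑ i, ∑ j, (if A i j then 1 else 0) := by
        rw [← Equiv.sum_comp ρ (fun i => ∑ j, if A i j then (1:ℕ) else 0)]
        exact Finset.sum_congr rfl fun i _ =>
          (Equiv.sum_comp σ (fun j => if A (ρ i) j then (1:ℕ) else 0))

lemma zeroRow_invar {A B : Matrix (Fin 2) (Fin κ) Bool} (h : matRel 2 κ A B) :
    (∃ i, ∀ j, B i j = false) ↔ ∃ i, ∀ j, A i j = false := by
  obtain ⟨ρ, σ, h⟩ := h
  constructor
  · rintro ⟨i, hi⟩
    refine ⟨ρ i, fun j => ?_⟩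
    have := h i (σ⁻¹ j)
    rw [hi] at this
    simpa using this.symm
  · rintro ⟨i, hi⟩
    refine ⟨ρ⁻¹ i, fun j => ?_⟩
    rw [h (ρ⁻¹ i) j]
    simpa using hi (σ j)

lemma oneRow_invar {A B : Matrix (Fin 2) (Fin κ) Bool} (h : matRel 2 κ A B) :
    (∃ i, ∀ j, B i j = true) ↔ ∃ i, ∀ j, A i j = true := by
  obtain ⟨ρ, σ, h⟩ := h
  constructor
  · rintro ⟨i, hi⟩
    refine ⟨ρ i, fun j => ?_⟩
    have := h i (σ⁻¹ j)
    rw [hi] at this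
    simpa using this.symm
  · rintro ⟨i, hi⟩
    refine ⟨ρ⁻¹ i, fun j => ?_⟩
    rw [h (ρ⁻¹ i) j]
    simpa using hi (σ j)

lemma bad_invar {A B : Matrix (Fin 2) (Fin κ) Bool} (h : matRel 2 κ A B) :
    bad B ↔ bad A := by
  unfold bad
  rw [zeroRow_invar h, oneRow_invar h]

open Finset in
lemma exists_perm (s t : Finset (Fin κ)) (h : s.card = t.card) :
    ∃ σ : Equiv.Perm (Fin κ), ∀ x, x ∈ s ↔ σ x ∈ t := by
  classical
  have h' : sᶜ.card = tᶜ.card := by simp [Finset.card_compl, h]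
  let e : {x // x ∈ s} ≃ {x // x ∈ t} := Finset.equivOfCardEq h
  let f0 : {x // x ∈ sᶜ} ≃ {x // x ∈ tᶜ} := Finset.equivOfCardEq h'
  let f : {x // ¬ x ∈ s} ≃ {x // ¬ x ∈ t} :=
    ((Equiv.subtypeEquivRight (fun x => (Finset.mem_compl (s := s)).symm)).trans f0).trans
      (Equiv.subtypeEquivRight (fun x => Finset.mem_compl (s := t)))
  refine ⟨Equiv.subtypeCongr e f, fun x => ?_⟩
  by_cases hx : x ∈ s
  · simp only [hx, true_iff]
    have : Equiv.subtypeCongr e f x = (e ⟨x, hx⟩ : Fin κ) := by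
      simp [Equiv.subtypeCongr, hx]
    rw [this]; exact (e ⟨x, hx⟩).2
  · simp only [hx, false_iff]
    have : Equiv.subtypeCongr e f x = (f ⟨x, hx⟩ : Fin κ) := by
      simp [Equiv.subtypeCongr, hx]
    rw [this]; exact (f ⟨x, hx⟩).2

/-- Canonical matrix: row 0 constant `b`, row 1 with `k` ones. -/
def cmat (κ : ℕ) (b : Bool) (k : ℕ) : Matrix (Fin 2) (Fin κ) Bool :=
  fun i j => if i = 0 then b else decide (j.val < k)

lemma filter_lt_card {k : ℕ} (hk : k ≤ κ) :
    (Finset.univ.filter fun j : Fin κ => j.val < k).card = k := by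
  have : (Finset.univ.filter fun j : Fin κ => j.val < k) =
      (Finset.univ : Finset (Fin k)).map ⟨Fin.castLE hk, Fin.castLE_injective hk⟩ := by
    ext j
    simp only [Finset.mem_filter, Finset.mem_univ, true_and, Finset.mem_map,
      Function.Embedding.coeFn_mk]
    constructor
    · intro hj; exact ⟨⟨j.val, hj⟩, rfl⟩
    · rintro ⟨a, rfl⟩; exact a.2
  rw [this, Finset.card_map, Finset.card_univ, Fintype.card_fin]

lemma row_sum_eq_card (v : Fin κ → Bool) :
    (∑ j, if v j then (1:ℕ) else 0) = (Finset.univ.filter fun j => v j = true).card := by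
  rw [Finset.card_filter]

lemma ones_cmat (b : Bool) {k : ℕ} (hk : k ≤ κ) :
    ones (cmat κ b k) = (if b then κ else 0) + k := by
  unfold ones
  rw [Fin.sum_univ_two]
  have h0 : (∑ j, if cmat κ b k 0 j then (1:ℕ) else 0) = if b then κ else 0 := by
    unfold cmat
    cases b <;> simp
  have h1 : (∑ j, if cmat κ b k 1 j then (1:ℕ) else 0) = k := by
    have hc : ∀ j : Fin κ, cmat κ b k 1 j = decide (j.val < k) := fun j => by
      simp [cmat, Fin.one_eq_zero_iff]
    calc (∑ j, if cmat κ b k 1 j then (1:ℕ) else 0)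
        = ∑ j : Fin κ, if (j.val < k) then (1:ℕ) else 0 := by
          refine Finset.sum_congr rfl fun j _ => ?_
          rw [hc j]; by_cases h : j.val < k <;> simp [h]
      _ = (Finset.univ.filter fun j : Fin κ => j.val < k).card :=
          (Finset.card_filter _ _).symm
      _ = k := filter_lt_card hk
  rw [h0, h1]

lemma zeroRow_cmat_false (k : ℕ) : ∃ i, ∀ j, cmat κ false k i j = false :=
  ⟨0, fun j => by simp [cmat]⟩

lemma not_zeroRow_cmat_true (hκ : 0 < κ) {k : ℕ} (hk : 1 ≤ k) :
    ¬ ∃ i, ∀ j, cmat κ true k i j = false := by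
  rintro ⟨i, hi⟩
  have := hi ⟨0, hκ⟩
  unfold cmat at this
  by_cases h : i = 0
  · simp [h] at this
  · simp [h, Nat.lt_of_lt_of_le Nat.zero_lt_one hk] at this

lemma bad_cmat (b : Bool) (k : ℕ) : bad (cmat κ b k) := by
  cases b
  · exact Or.inl (zeroRow_cmat_false k)
  · exact Or.inr ⟨0, fun j => by simp [cmat]⟩

lemma fin2_cases (p i : Fin 2) : p = i ∨ p = i + 1 := by fin_cases p <;> fin_cases i <;> decide

lemma swap_self (i : Fin 2) : Equiv.swap i 0 i = 0 := Equiv.swap_apply_left i 0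

lemma swap_other (i : Fin 2) : Equiv.swap i 0 (i + 1) = 1 := by
  fin_cases i <;> simp [Equiv.swap_apply_def]

/-- If row `i` of `A` is constant `b` then `A` is equivalent to a canonical matrix. -/
lemma reach_cmat (A : Matrix (Fin 2) (Fin κ) Bool) (i : Fin 2) (b : Bool)
    (hb : ∀ j, A i j = b) :
    matRel 2 κ (cmat κ b ((Finset.univ.filter fun j => A (i + 1) j = true).card)) A := by
  classical
  set k := (Finset.univ.filter fun j => A (i + 1) j = true).card with hkdef
  have hk : k ≤ κ := by
    calc k ≤ (Finset.univ : Finset (Fin κ)).card := Finset.card_filter_le _ _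
    _ = κ := by simp
  obtain ⟨σ, hσ⟩ := exists_perm (Finset.univ.filter fun j => A (i + 1) j = true)
    (Finset.univ.filter fun j : Fin κ => j.val < k) (by rw [filter_lt_card hk])
  refine ⟨Equiv.swap i 0, σ, fun p q => ?_⟩
  rcases fin2_cases p i with rfl | rfl
  · rw [swap_self, hb]
    simp [cmat]
  · rw [swap_other]
    have h1 : cmat κ b k 1 (σ q) = decide ((σ q).val < k) := by
      unfold cmat
      simp [Fin.one_eq_zero_iff]
    rw [h1]
    have := hσ q
    simp only [Finset.mem_filter, Finset.mem_univ, true_and] at this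
    by_cases hA : A (i + 1) q = true
    · rw [hA]
      exact (decide_eq_true (this.mp hA)).symm
    · rw [Bool.not_eq_true] at hA
      rw [hA]
      have : ¬ ((σ q).val < k) := fun hc => by
        have := this.mpr hc; rw [hA] at this; exact Bool.false_ne_true this
      simp [this]

/-- The quotient of all matrices. -/
abbrev Q (κ : ℕ) := Quot (matRel 2 κ)

def P : Q κ → Prop :=
  Quot.lift bad (fun A B h => propext (bad_invar h).symm)

lemma P_mk (A : Matrix (Fin 2) (Fin κ) Bool) : P (Quot.mk _ A) ↔ bad A := Iff.rfl

/-- Enumeration of the bad classes. -/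
noncomputable def badEnum (κ : ℕ) : (Fin (κ + 1) ⊕ Fin κ) → {q : Q κ // P q}
  | Sum.inl k => ⟨Quot.mk _ (cmat κ false k.val), bad_cmat false k.val⟩
  | Sum.inr k => ⟨Quot.mk _ (cmat κ true (k.val + 1)), bad_cmat true (k.val + 1)⟩

lemma badEnum_bijective (hκ : 0 < κ) : Function.Bijective (badEnum κ) := by
  constructor
  · intro a b hab
    have hval := congrArg Subtype.val hab
    match a, b with
    | Sum.inl k, Sum.inl m =>
      simp only [badEnum] at hval
      have hrel := (quot_mk_eq_iff _ _).mp hval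
      have := ones_invar hrel
      rw [ones_cmat false (Nat.lt_succ_iff.mp k.2), ones_cmat false (Nat.lt_succ_iff.mp m.2)]
        at this
      norm_num at this
      exact congrArg Sum.inl (Fin.ext (by omega))
    | Sum.inr k, Sum.inr m =>
      simp only [badEnum] at hval
      have hrel := (quot_mk_eq_iff _ _).mp hval
      have := ones_invar hrel
      rw [ones_cmat true (by omega : k.val + 1 ≤ κ), ones_cmat true (by omega : m.val + 1 ≤ κ)]
        at this
      norm_num at this
      exact congrArg Sum.inr (Fin.ext (by omega))
    | Sum.inl k, Sum.inr m =>
      exfalso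
      simp only [badEnum] at hval
      have hrel := (quot_mk_eq_iff _ _).mp hval
      have := (zeroRow_invar hrel).mpr (zeroRow_cmat_false k.val)
      exact not_zeroRow_cmat_true hκ (Nat.le_add_left 1 m.val) this
    | Sum.inr k, Sum.inl m =>
      exfalso
      simp only [badEnum] at hval
      have hrel := (quot_mk_eq_iff _ _).mp hval
      have := (zeroRow_invar hrel).mp (zeroRow_cmat_false m.val)
      exact not_zeroRow_cmat_true hκ (Nat.le_add_left 1 k.val) this
  · rintro ⟨q, hq⟩
    obtain ⟨A, rfl⟩ := Quot.exists_rep q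
    classical
    by_cases h0 : ∃ i, ∀ j, A i j = false
    · obtain ⟨i, hi⟩ := h0
      set k := (Finset.univ.filter fun j => A (i + 1) j = true).card with hkdef
      have hk : k ≤ κ := by
        calc k ≤ (Finset.univ : Finset (Fin κ)).card := Finset.card_filter_le _ _
        _ = κ := by simp
      refine ⟨Sum.inl ⟨k, Nat.lt_succ_of_le hk⟩, ?_⟩
      apply Subtype.ext
      exact Quot.sound (reach_cmat A i false hi)
    · have h1 : ∃ i, ∀ j, A i j = true := (P_mk A).mp hq |>.resolve_left h0
      obtain ⟨i, hi⟩ := h1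
      set k := (Finset.univ.filter fun j => A (i + 1) j = true).card with hkdef
      have hk : k ≤ κ := by
        calc k ≤ (Finset.univ : Finset (Fin κ)).card := Finset.card_filter_le _ _
        _ = κ := by simp
      have hk1 : 1 ≤ k := by
        by_contra hc
        have hk0 : k = 0 := by omega
        apply h0
        refine ⟨i + 1, fun j => ?_⟩
        by_contra hj
        rw [Bool.not_eq_false] at hj
        have : j ∈ (Finset.univ.filter fun j => A (i + 1) j = true) := by simp [hj]
        rw [Finset.card_eq_zero.mp hk0] at this
        exact absurd this (Finset.notMem_empty j)
      refine ⟨Sum.inr ⟨k - 1, by omega⟩, ?_⟩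
      apply Subtype.ext
      have : k - 1 + 1 = k := by omega
      simp only [badEnum, this]
      exact Quot.sound (reach_cmat A i true hi)

/-- The restricted quotient relation. -/
abbrev rel' (κ : ℕ) := fun A B : {M : Matrix (Fin 2) (Fin κ) Bool // noConstRow M} =>
  matRel 2 κ A.1 B.1

noncomputable def goodMap (κ : ℕ) : Quot (rel' κ) → {q : Q κ // ¬ P q} :=
  Quot.lift (fun A => ⟨Quot.mk _ A.1, by
    rw [P_mk, bad_iff_not, not_not]; exact A.2⟩)
    (fun A B h => Subtype.ext (Quot.sound h))

lemma goodMap_bijective : Function.Bijective (goodMap κ) := by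
  constructor
  · intro qa qb hab
    obtain ⟨A, rfl⟩ := Quot.exists_rep qa
    obtain ⟨B, rfl⟩ := Quot.exists_rep qb
    have hval := congrArg Subtype.val hab
    simp only [goodMap] at hval
    exact Quot.sound ((quot_mk_eq_iff _ _).mp hval)
  · rintro ⟨q, hq⟩
    obtain ⟨A, rfl⟩ := Quot.exists_rep q
    rw [P_mk, bad_iff_not, not_not] at hq
    exact ⟨Quot.mk _ ⟨A, hq⟩, rfl⟩

end Stmt10

/-- The number of equivalence classes of 2×κ binary matrices (under row
and column permutations) that contain no all-zero row and no all-one row equals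
`|K_{κ,2}| - 2(κ+1) + 1`, where `|K_{κ,2}|` is the total number of equivalence classes
of 2×κ binary matrices. -/
theorem stmt10 (κ : ℕ) (hκ : 0 < κ) :
    (Nat.card (Quot (fun A B : {M : Matrix (Fin 2) (Fin κ) Bool // noConstRow M} =>
        matRel 2 κ A.1 B.1)) : ℤ) =
      (Nat.card (Quot (matRel 2 κ)) : ℤ) - 2 * (κ + 1) + 1 := by
  classical
  have hbad : Nat.card {q : Stmt10.Q κ // Stmt10.P q} = 2 * κ + 1 := by
    rw [← Nat.card_eq_of_bijective _ (Stmt10.badEnum_bijective hκ)]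
    simp [Nat.card_sum]
    ring
  have hgood : Nat.card (Quot (Stmt10.rel' κ)) = Nat.card {q : Stmt10.Q κ // ¬ Stmt10.P q} :=
    Nat.card_eq_of_bijective _ Stmt10.goodMap_bijective
  have htot : Nat.card (Stmt10.Q κ) =
      Nat.card {q : Stmt10.Q κ // Stmt10.P q} + Nat.card {q : Stmt10.Q κ // ¬ Stmt10.P q} := by
    rw [← Nat.card_sum]
    exact (Nat.card_congr (Equiv.sumCompl Stmt10.P)).symm
  have : Nat.card (Quot (Stmt10.rel' κ)) + (2 * κ + 1) = Nat.card (Stmt10.Q κ) := by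
    rw [hgood, htot, hbad]; ring
  have key : Nat.card (Quot (fun A B : {M : Matrix (Fin 2) (Fin κ) Bool // noConstRow M} =>
      matRel 2 κ A.1 B.1)) + (2 * κ + 1) = Nat.card (Quot (matRel 2 κ)) := this
  omega
end

section
/- If two binary matrices A and B of the same size γ×κ have equal sets of overlap parameters (i.e., for every nonempty subset S of row indices, the number of columns having 1s in all rows of S is the same for A and B), then A and B are column-permuted versions of each other; conversely, column permutations preserve all overlap parameters. -/
/-!
Reading each column as its support `T ⊆ Fin γ`, `t_S` counts the columns whose support contains
`S`. The number of columns with support exactly `T` is the upper count at `T` minus the exact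
counts strictly above `T`, so by downward induction (Möbius inversion, valid in any finite poset)
the upper counts determine the exact counts. Equal exact counts say that the two multisets of
columns coincide, which is a column permutation.
-/

/-- The overlap parameter `t_S(M)`: the number of columns of `M` having 1s in all rows
indexed by `S`. -/
def overlap {γ κ : ℕ} (M : Matrix (Fin γ) (Fin κ) Bool) (S : Finset (Fin γ)) : ℕ :=
  (Finset.univ.filter fun j => ∀ i ∈ S, M i j = true).card

open Finset

section UpperCounts

variable {κ α : Type*} [Fintype κ] [DecidableEq α]

theorem exists_perm_comp_eq_of_card_fiber_eq {u v : κ → α}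
    (h : ∀ x, #{j | u j = x} = #{j | v j = x}) : ∃ σ : Equiv.Perm κ, ∀ j, v j = u (σ j) := by
  have e : ∀ x, {j // v j = x} ≃ {j // u j = x} := fun x =>
    Fintype.equivOfCardEq (by rw [Fintype.card_subtype, Fintype.card_subtype, h])
  exact ⟨Equiv.ofFiberEquiv e, fun j => (Equiv.ofFiberEquiv_map e j).symm⟩

variable [Fintype α] [PartialOrder α] [DecidableLE α] [DecidableLT α]

theorem card_le_eq_card_eq_add_sum (u : κ → α) (x : α) :
    #{j | x ≤ u j} = #{j | u j = x} + ∑ y with x < y, #{j | u j = y} := by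
  have hIci : filter (x ≤ ·) univ = insert x (filter (x < ·) univ) := by
    ext y; simp [le_iff_eq_or_lt, eq_comm]
  rw [card_eq_sum_card_fiberwise (f := u) (t := filter (x ≤ ·) univ) fun j hj => by simpa using hj,
    hIci, sum_insert (by simp)]
  congr 1
  · congr 1; ext j; simp +contextual
  · refine sum_congr rfl fun y hy => ?_
    congr 1; ext j
    simp only [mem_filter, mem_univ, true_and] at hy ⊢
    exact ⟨And.right, fun hj => ⟨hj ▸ hy.le, hj⟩⟩

theorem card_fiber_eq_of_card_le_eq {u v : κ → α}
    (h : ∀ x, #{j | x ≤ u j} = #{j | x ≤ v j}) (x : α) :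
    #{j | u j = x} = #{j | v j = x} := by
  induction x using WellFoundedGT.induction with
  | _ x ih =>
    have hx := h x
    rw [card_le_eq_card_eq_add_sum, card_le_eq_card_eq_add_sum,
      sum_congr rfl fun y hy => ih y (by simpa using hy)] at hx
    omega

end UpperCounts

section Columns

variable {γ κ : ℕ}

def columnSupport (M : Matrix (Fin γ) (Fin κ) Bool) (j : Fin κ) : Finset (Fin γ) := {i | M i j}

theorem columnSupport_eq_iff {M N : Matrix (Fin γ) (Fin κ) Bool} {j k : Fin κ} :
    columnSupport M j = columnSupport N k ↔ ∀ i, M i j = N i k := by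
  simp only [columnSupport, Finset.ext_iff, mem_filter, mem_univ, true_and, Bool.coe_iff_coe]

theorem overlap_eq_card_subset_columnSupport (M : Matrix (Fin γ) (Fin κ) Bool)
    (S : Finset (Fin γ)) : overlap M S = #{j | S ⊆ columnSupport M j} := by
  simp [overlap, columnSupport, subset_iff]

theorem overlap_empty (M : Matrix (Fin γ) (Fin κ) Bool) : overlap M ∅ = κ := by
  simp [overlap]

theorem overlap_submatrix_perm (M : Matrix (Fin γ) (Fin κ) Bool) (σ : Equiv.Perm (Fin κ))
    (S : Finset (Fin γ)) : overlap (M.submatrix id σ) S = overlap M S :=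
  card_equiv σ fun j => by simp only [mem_filter, mem_univ, true_and]; rfl

end Columns

/-- Two binary matrices `A, B` of the same size have equal overlap
parameters for every nonempty subset of rows if and only if they are column-permuted
versions of each other. -/
theorem stmt12 (γ κ : ℕ) (A B : Matrix (Fin γ) (Fin κ) Bool) :
    (∀ S : Finset (Fin γ), S.Nonempty → overlap A S = overlap B S) ↔
      ∃ σ : Equiv.Perm (Fin κ), ∀ i j, B i j = A i (σ j) := by
  constructor
  · intro h
    have hle (S : Finset (Fin γ)) :
        #{j | S ⊆ columnSupport A j} = #{j | S ⊆ columnSupport B j} := by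
      simp only [← overlap_eq_card_subset_columnSupport]
      rcases S.eq_empty_or_nonempty with rfl | hS
      · rw [overlap_empty, overlap_empty]
      · exact h S hS
    obtain ⟨σ, hσ⟩ := exists_perm_comp_eq_of_card_fiber_eq (card_fiber_eq_of_card_le_eq hle)
    exact ⟨σ, fun i j => columnSupport_eq_iff.mp (hσ j) i⟩
  · rintro ⟨σ, hσ⟩ S -
    obtain rfl : B = A.submatrix id σ := Matrix.ext hσ
    exact (overlap_submatrix_perm A σ S).symm
end

section
/- For a spatially-coupled matrix H_SC with memory 1 and coupling length l, the total number of 6-cycles satisfies F(H_SC) = l·F(R_1) + (l-1)·(F(R_2) - 2·F(R_1)), where R_1 and R_2 denote the submatrices of H_SC consisting of its first replica and first two replicas respectively, and F counts 6-cycles. -/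
/-- The number of 6-cycles of the bipartite graph of a binary matrix `M`, counted as
ordered tuples of three distinct rows `i₁,i₂,i₃` and three distinct columns `j₁,j₂,j₃`
with `M` equal to 1 at `(i₁,j₁),(i₁,j₂),(i₂,j₂),(i₂,j₃),(i₃,j₃),(i₃,j₁)` (each
geometric 6-cycle is counted the same constant number of times). -/
def sixCycleCount {m n : Type*} [Fintype m] [Fintype n] [DecidableEq m] [DecidableEq n]
    (M : Matrix m n Bool) : ℕ :=
  (Finset.univ.filter fun t : (m × m × m) × (n × n × n) =>
      t.1.1 ≠ t.1.2.1 ∧ t.1.1 ≠ t.1.2.2 ∧ t.1.2.1 ≠ t.1.2.2 ∧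
      t.2.1 ≠ t.2.2.1 ∧ t.2.1 ≠ t.2.2.2 ∧ t.2.2.1 ≠ t.2.2.2 ∧
      M t.1.1 t.2.1 = true ∧ M t.1.1 t.2.2.1 = true ∧
      M t.1.2.1 t.2.2.1 = true ∧ M t.1.2.1 t.2.2.2 = true ∧
      M t.1.2.2 t.2.2.2 = true ∧ M t.1.2.2 t.2.1 = true).card

/-- The spatially-coupled matrix with memory 1 and coupling length `l`, built by
diagonally coupling `l` replicas of the component matrices `H₀` (block row `r`) and
`H₁` (block row `r+1`). -/
def scCouple {p q : ℕ} (l : ℕ) (H0 H1 : Matrix (Fin p) (Fin q) Bool) :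
    Matrix (Fin (l + 1) × Fin p) (Fin l × Fin q) Bool :=
  fun R C =>
    if (R.1 : ℕ) = (C.1 : ℕ) then H0 R.2 C.2
    else if (R.1 : ℕ) = (C.1 : ℕ) + 1 then H1 R.2 C.2
    else false

namespace Stmt14Aux

variable {p q : ℕ} (H0 H1 : Matrix (Fin p) (Fin q) Bool)

abbrev Tup (p q l : ℕ) :=
  ((Fin (l+1) × Fin p) × (Fin (l+1) × Fin p) × (Fin (l+1) × Fin p)) ×
  ((Fin l × Fin q) × (Fin l × Fin q) × (Fin l × Fin q))

def cyc (l : ℕ) : Finset (Tup p q l) :=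
  Finset.univ.filter fun t =>
      t.1.1 ≠ t.1.2.1 ∧ t.1.1 ≠ t.1.2.2 ∧ t.1.2.1 ≠ t.1.2.2 ∧
      t.2.1 ≠ t.2.2.1 ∧ t.2.1 ≠ t.2.2.2 ∧ t.2.2.1 ≠ t.2.2.2 ∧
      scCouple l H0 H1 t.1.1 t.2.1 = true ∧ scCouple l H0 H1 t.1.1 t.2.2.1 = true ∧
      scCouple l H0 H1 t.1.2.1 t.2.2.1 = true ∧ scCouple l H0 H1 t.1.2.1 t.2.2.2 = true ∧
      scCouple l H0 H1 t.1.2.2 t.2.2.2 = true ∧ scCouple l H0 H1 t.1.2.2 t.2.1 = true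

lemma sixCycleCount_eq (l : ℕ) :
    sixCycleCount (scCouple l H0 H1) = (cyc H0 H1 l).card := rfl

lemma scCouple_eq_true {l : ℕ} (R : Fin (l+1) × Fin p) (C : Fin l × Fin q) :
    scCouple l H0 H1 R C = true ↔
      ((R.1 : ℕ) = (C.1 : ℕ) ∧ H0 R.2 C.2 = true) ∨
      ((R.1 : ℕ) = (C.1 : ℕ) + 1 ∧ H1 R.2 C.2 = true) := by
  unfold scCouple
  split_ifs with h1 h2 <;> simp_all

def minb {p q l : ℕ} (t : Tup p q l) : ℕ :=
  min (t.2.1.1 : ℕ) (min (t.2.2.1.1 : ℕ) (t.2.2.2.1 : ℕ))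

lemma mem_cyc {l : ℕ} (b1 b2 b3 : Fin (l+1)) (i1 i2 i3 : Fin p)
    (c1 c2 c3 : Fin l) (j1 j2 j3 : Fin q) :
    (((b1,i1),(b2,i2),(b3,i3)), ((c1,j1),(c2,j2),(c3,j3))) ∈ cyc H0 H1 l ↔
      ¬((b1:ℕ) = (b2:ℕ) ∧ i1 = i2) ∧ ¬((b1:ℕ) = (b3:ℕ) ∧ i1 = i3) ∧
      ¬((b2:ℕ) = (b3:ℕ) ∧ i2 = i3) ∧
      ¬((c1:ℕ) = (c2:ℕ) ∧ j1 = j2) ∧ ¬((c1:ℕ) = (c3:ℕ) ∧ j1 = j3) ∧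
      ¬((c2:ℕ) = (c3:ℕ) ∧ j2 = j3) ∧
      (((b1:ℕ) = (c1:ℕ) ∧ H0 i1 j1 = true) ∨ ((b1:ℕ) = (c1:ℕ)+1 ∧ H1 i1 j1 = true)) ∧
      (((b1:ℕ) = (c2:ℕ) ∧ H0 i1 j2 = true) ∨ ((b1:ℕ) = (c2:ℕ)+1 ∧ H1 i1 j2 = true)) ∧
      (((b2:ℕ) = (c2:ℕ) ∧ H0 i2 j2 = true) ∨ ((b2:ℕ) = (c2:ℕ)+1 ∧ H1 i2 j2 = true)) ∧
      (((b2:ℕ) = (c3:ℕ) ∧ H0 i2 j3 = true) ∨ ((b2:ℕ) = (c3:ℕ)+1 ∧ H1 i2 j3 = true)) ∧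
      (((b3:ℕ) = (c3:ℕ) ∧ H0 i3 j3 = true) ∨ ((b3:ℕ) = (c3:ℕ)+1 ∧ H1 i3 j3 = true)) ∧
      (((b3:ℕ) = (c1:ℕ) ∧ H0 i3 j1 = true) ∨ ((b3:ℕ) = (c1:ℕ)+1 ∧ H1 i3 j1 = true)) := by
  simp [cyc, scCouple_eq_true, Prod.ext_iff, Fin.ext_iff, not_and]


private lemma mod_sub_add {a c n n' : ℕ} (h1 : a - c < n') (h2 : a < n) (h3 : c ≤ a) :
    ((a - c) % n' + c) % n = a := by
  rw [Nat.mod_eq_of_lt h1, Nat.mod_eq_of_lt (by omega)]; omega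

private lemma mod_add_sub {a c n n' : ℕ} (h1 : a + c < n) (h2 : a < n') :
    ((a + c) % n - c) % n' = a := by
  rw [Nat.mod_eq_of_lt h1, show a + c - c = a from by omega, Nat.mod_eq_of_lt h2]

private lemma ne_sub {a b c : ℕ} {P : Prop} (ha : c ≤ a) (hb : c ≤ b)
    (h : ¬(a = b ∧ P)) : ¬(a - c = b - c ∧ P) :=
  fun ⟨h1, h2⟩ => h ⟨by omega, h2⟩

private lemma ne_add {a b c : ℕ} {P : Prop} (h : ¬(a = b ∧ P)) : ¬(a + c = b + c ∧ P) :=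
  fun ⟨h1, h2⟩ => h ⟨by omega, h2⟩

private lemma edge_sub {a b c : ℕ} {P Q : Prop} (ha : c ≤ a) (hb : c ≤ b) :
    ((a = b ∧ P) ∨ (a = b + 1 ∧ Q)) → ((a - c = b - c ∧ P) ∨ (a - c = b - c + 1 ∧ Q)) := by
  rintro (⟨h, hp⟩ | ⟨h, hp⟩)
  · exact Or.inl ⟨by omega, hp⟩
  · exact Or.inr ⟨by omega, hp⟩

private lemma edge_add {a b c : ℕ} {P Q : Prop} :
    ((a = b ∧ P) ∨ (a = b + 1 ∧ Q)) → ((a + c = b + c ∧ P) ∨ (a + c = b + c + 1 ∧ Q)) := by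
  rintro (⟨h, hp⟩ | ⟨h, hp⟩)
  · exact Or.inl ⟨by omega, hp⟩
  · exact Or.inr ⟨by omega, hp⟩

private lemma min_sub {a b d c : ℕ} (h : min a (min b d) = c) :
    min (a - c) (min (b - c) (d - c)) = 0 := by omega

private lemma min_add {a b d c : ℕ} (h : min a (min b d) = 0) :
    min (a + c) (min (b + c) (d + c)) = c := by omega

private lemma pair_bound {B C C' : ℕ} (h1 : B = C ∨ B = C + 1)
    (h2 : B = C' ∨ B = C' + 1) : C ≤ C' + 1 ∧ C' ≤ C + 1 := by omega

private lemma window {c C1 C2 C3 : ℕ} (h12 : C1 ≤ C2 + 1 ∧ C2 ≤ C1 + 1)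
    (h23 : C2 ≤ C3 + 1 ∧ C3 ≤ C2 + 1) (h31 : C3 ≤ C1 + 1 ∧ C1 ≤ C3 + 1)
    (hmin : min C1 (min C2 C3) = c) :
    c ≤ C1 ∧ C1 ≤ c + 1 ∧ c ≤ C2 ∧ C2 ≤ c + 1 ∧ c ≤ C3 ∧ C3 ≤ c + 1 := by omega

private lemma cfact {c l l' C : ℕ} (hl' : l' = min (l - c) 2) (hc : c < l) (hC : C < l)
    (h1 : c ≤ C) (h2 : C ≤ c + 1) : C - c < l' := by omega

private lemma bfact {c l' B C : ℕ} (hE : B = C ∨ B = C + 1) (hC : c ≤ C)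
    (hC1 : C ≤ c + 1) (hCl : C - c < l') : c ≤ B ∧ B - c < l' + 1 := by omega

private lemma cfact' {c l l' C : ℕ} (hC : C < l') (hle : l' ≤ l - c) (hc : c < l) :
    C + c < l := by omega

private lemma bfact' {c l l' B C : ℕ} (hE : B = C ∨ B = C + 1) (hC : C < l')
    (hle : l' ≤ l - c) (hc : c < l) : B + c < l + 1 := by omega

/-- subtract `c` from all block indices. -/
def shiftT (c : ℕ) {l l' : ℕ} (hl' : 0 < l') (t : Tup p q l) : Tup p q l' :=
  (((⟨((t.1.1.1 : ℕ) - c) % (l'+1), Nat.mod_lt _ (Nat.succ_pos _)⟩, t.1.1.2),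
    (⟨((t.1.2.1.1 : ℕ) - c) % (l'+1), Nat.mod_lt _ (Nat.succ_pos _)⟩, t.1.2.1.2),
    (⟨((t.1.2.2.1 : ℕ) - c) % (l'+1), Nat.mod_lt _ (Nat.succ_pos _)⟩, t.1.2.2.2)),
   ((⟨((t.2.1.1 : ℕ) - c) % l', Nat.mod_lt _ hl'⟩, t.2.1.2),
    (⟨((t.2.2.1.1 : ℕ) - c) % l', Nat.mod_lt _ hl'⟩, t.2.2.1.2),
    (⟨((t.2.2.2.1 : ℕ) - c) % l', Nat.mod_lt _ hl'⟩, t.2.2.2.2)))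

/-- add `c` to all block indices. -/
def unshiftT (c : ℕ) {l l' : ℕ} (hl : 0 < l) (t : Tup p q l') : Tup p q l :=
  (((⟨((t.1.1.1 : ℕ) + c) % (l+1), Nat.mod_lt _ (Nat.succ_pos _)⟩, t.1.1.2),
    (⟨((t.1.2.1.1 : ℕ) + c) % (l+1), Nat.mod_lt _ (Nat.succ_pos _)⟩, t.1.2.1.2),
    (⟨((t.1.2.2.1 : ℕ) + c) % (l+1), Nat.mod_lt _ (Nat.succ_pos _)⟩, t.1.2.2.2)),
   ((⟨((t.2.1.1 : ℕ) + c) % l, Nat.mod_lt _ hl⟩, t.2.1.2),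
    (⟨((t.2.2.1.1 : ℕ) + c) % l, Nat.mod_lt _ hl⟩, t.2.2.1.2),
    (⟨((t.2.2.2.1 : ℕ) + c) % l, Nat.mod_lt _ hl⟩, t.2.2.2.2)))

set_option maxHeartbeats 1000000 in
lemma fiber_card (l c : ℕ) (hc : c < l) :
    ((cyc H0 H1 l).filter fun t => minb t = c).card =
    ((cyc H0 H1 (min (l - c) 2)).filter fun t => minb t = 0).card := by
  set l' := min (l - c) 2 with hl'
  have hl'0 : 0 < l' := by omega
  have hl0 : 0 < l := by omega
  have hl'le : l' ≤ l - c := by omega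
  refine Finset.card_bij' (fun t _ => shiftT c hl'0 t) (fun t _ => unshiftT c hl0 t)
    ?_ ?_ ?_ ?_
  · -- forward membership
    rintro ⟨⟨⟨b1,i1⟩,⟨b2,i2⟩,⟨b3,i3⟩⟩,⟨⟨c1,j1⟩,⟨c2,j2⟩,⟨c3,j3⟩⟩⟩ ht
    rw [Finset.mem_filter, mem_cyc] at ht
    obtain ⟨⟨n12,n13,n23,m12,m13,m23,e1,e2,e3,e4,e5,e6⟩, hmin⟩ := ht
    simp only [minb] at hmin
    have hE1 := e1.imp And.left And.left
    have hE2 := e2.imp And.left And.left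
    have hE3 := e3.imp And.left And.left
    have hE4 := e4.imp And.left And.left
    have hE5 := e5.imp And.left And.left
    have hE6 := e6.imp And.left And.left
    obtain ⟨w1, w1', w2, w2', w3, w3'⟩ :=
      window (pair_bound hE1 hE2) (pair_bound hE3 hE4) (pair_bound hE5 hE6) hmin
    have p1 := cfact hl' hc c1.isLt w1 w1'
    have p2 := cfact hl' hc c2.isLt w2 w2'
    have p3 := cfact hl' hc c3.isLt w3 w3'
    obtain ⟨p10, p7⟩ := bfact hE1 w1 w1' p1
    obtain ⟨p11, p8⟩ := bfact hE3 w2 w2' p2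
    obtain ⟨p12, p9⟩ := bfact hE5 w3 w3' p3
    rw [Finset.mem_filter]
    constructor
    · simp only [shiftT]
      rw [mem_cyc]
      simp only [Fin.val_mk]
      rw [Nat.mod_eq_of_lt p1, Nat.mod_eq_of_lt p2, Nat.mod_eq_of_lt p3,
        Nat.mod_eq_of_lt p7, Nat.mod_eq_of_lt p8, Nat.mod_eq_of_lt p9]
      exact ⟨ne_sub p10 p11 n12, ne_sub p10 p12 n13, ne_sub p11 p12 n23,
        ne_sub w1 w2 m12, ne_sub w1 w3 m13, ne_sub w2 w3 m23,
        edge_sub p10 w1 e1, edge_sub p10 w2 e2, edge_sub p11 w2 e3,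
        edge_sub p11 w3 e4, edge_sub p12 w3 e5, edge_sub p12 w1 e6⟩
    · simp only [shiftT, minb, Fin.val_mk]
      rw [Nat.mod_eq_of_lt p1, Nat.mod_eq_of_lt p2, Nat.mod_eq_of_lt p3]
      exact min_sub hmin
  · -- backward membership
    rintro ⟨⟨⟨b1,i1⟩,⟨b2,i2⟩,⟨b3,i3⟩⟩,⟨⟨c1,j1⟩,⟨c2,j2⟩,⟨c3,j3⟩⟩⟩ ht
    rw [Finset.mem_filter, mem_cyc] at ht
    obtain ⟨⟨n12,n13,n23,m12,m13,m23,e1,e2,e3,e4,e5,e6⟩, hmin⟩ := ht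
    simp only [minb] at hmin
    have hE1 := e1.imp And.left And.left
    have hE3 := e3.imp And.left And.left
    have hE5 := e5.imp And.left And.left
    have p1 := cfact' c1.isLt hl'le hc
    have p2 := cfact' c2.isLt hl'le hc
    have p3 := cfact' c3.isLt hl'le hc
    have p7 := bfact' hE1 c1.isLt hl'le hc
    have p8 := bfact' hE3 c2.isLt hl'le hc
    have p9 := bfact' hE5 c3.isLt hl'le hc
    rw [Finset.mem_filter]
    constructor
    · simp only [unshiftT]
      rw [mem_cyc]
      simp only [Fin.val_mk]
      rw [Nat.mod_eq_of_lt p1, Nat.mod_eq_of_lt p2, Nat.mod_eq_of_lt p3,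
        Nat.mod_eq_of_lt p7, Nat.mod_eq_of_lt p8, Nat.mod_eq_of_lt p9]
      exact ⟨ne_add n12, ne_add n13, ne_add n23, ne_add m12, ne_add m13, ne_add m23,
        edge_add e1, edge_add e2, edge_add e3, edge_add e4, edge_add e5, edge_add e6⟩
    · simp only [unshiftT, minb, Fin.val_mk]
      rw [Nat.mod_eq_of_lt p1, Nat.mod_eq_of_lt p2, Nat.mod_eq_of_lt p3]
      exact min_add hmin
  · -- left inverse
    rintro ⟨⟨⟨b1,i1⟩,⟨b2,i2⟩,⟨b3,i3⟩⟩,⟨⟨c1,j1⟩,⟨c2,j2⟩,⟨c3,j3⟩⟩⟩ ht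
    rw [Finset.mem_filter, mem_cyc] at ht
    obtain ⟨⟨n12,n13,n23,m12,m13,m23,e1,e2,e3,e4,e5,e6⟩, hmin⟩ := ht
    simp only [minb] at hmin
    have hE1 := e1.imp And.left And.left
    have hE2 := e2.imp And.left And.left
    have hE3 := e3.imp And.left And.left
    have hE4 := e4.imp And.left And.left
    have hE5 := e5.imp And.left And.left
    have hE6 := e6.imp And.left And.left
    obtain ⟨w1, w1', w2, w2', w3, w3'⟩ :=
      window (pair_bound hE1 hE2) (pair_bound hE3 hE4) (pair_bound hE5 hE6) hmin
    have p1 := cfact hl' hc c1.isLt w1 w1'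
    have p2 := cfact hl' hc c2.isLt w2 w2'
    have p3 := cfact hl' hc c3.isLt w3 w3'
    obtain ⟨p10, p7⟩ := bfact hE1 w1 w1' p1
    obtain ⟨p11, p8⟩ := bfact hE3 w2 w2' p2
    obtain ⟨p12, p9⟩ := bfact hE5 w3 w3' p3
    simp only [shiftT, unshiftT, Fin.val_mk, Prod.mk.injEq]
    exact ⟨⟨⟨Fin.ext (mod_sub_add p7 b1.isLt p10), trivial⟩,
            ⟨Fin.ext (mod_sub_add p8 b2.isLt p11), trivial⟩,
            ⟨Fin.ext (mod_sub_add p9 b3.isLt p12), trivial⟩⟩,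
           ⟨Fin.ext (mod_sub_add p1 c1.isLt w1), trivial⟩,
           ⟨Fin.ext (mod_sub_add p2 c2.isLt w2), trivial⟩,
           ⟨Fin.ext (mod_sub_add p3 c3.isLt w3), trivial⟩⟩
  · -- right inverse
    rintro ⟨⟨⟨b1,i1⟩,⟨b2,i2⟩,⟨b3,i3⟩⟩,⟨⟨c1,j1⟩,⟨c2,j2⟩,⟨c3,j3⟩⟩⟩ ht
    rw [Finset.mem_filter, mem_cyc] at ht
    obtain ⟨⟨n12,n13,n23,m12,m13,m23,e1,e2,e3,e4,e5,e6⟩, hmin⟩ := ht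
    have hE1 := e1.imp And.left And.left
    have hE3 := e3.imp And.left And.left
    have hE5 := e5.imp And.left And.left
    have p1 := cfact' c1.isLt hl'le hc
    have p2 := cfact' c2.isLt hl'le hc
    have p3 := cfact' c3.isLt hl'le hc
    have p7 := bfact' hE1 c1.isLt hl'le hc
    have p8 := bfact' hE3 c2.isLt hl'le hc
    have p9 := bfact' hE5 c3.isLt hl'le hc
    simp only [shiftT, unshiftT, Fin.val_mk, Prod.mk.injEq]
    exact ⟨⟨⟨Fin.ext (mod_add_sub p7 b1.isLt), trivial⟩,
            ⟨Fin.ext (mod_add_sub p8 b2.isLt), trivial⟩,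
            ⟨Fin.ext (mod_add_sub p9 b3.isLt), trivial⟩⟩,
           ⟨Fin.ext (mod_add_sub p1 c1.isLt), trivial⟩,
           ⟨Fin.ext (mod_add_sub p2 c2.isLt), trivial⟩,
           ⟨Fin.ext (mod_add_sub p3 c3.isLt), trivial⟩⟩


lemma card_sum (l : ℕ) :
    (cyc H0 H1 l).card =
      ∑ c ∈ Finset.range l, ((cyc H0 H1 l).filter fun t => minb t = c).card := by
  refine Finset.card_eq_sum_card_fiberwise fun t _ => Finset.mem_range.mpr ?_
  have := t.2.1.1.isLt
  simp only [minb]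
  omega

lemma cyc1_filter :
    ((cyc H0 H1 1).filter fun t => minb t = 0) = cyc H0 H1 1 := by
  refine Finset.filter_true_of_mem fun t _ => ?_
  have h1 := t.2.1.1.isLt
  simp only [minb]
  omega

end Stmt14Aux


/-- For a spatially-coupled matrix `H_SC` with memory 1 and coupling
length `l`, the number of 6-cycles satisfies
`F(H_SC) = l·F(R₁) + (l-1)·(F(R₂) - 2·F(R₁))`, where `R₁` and `R₂` are the submatrices
consisting of the first replica and the first two replicas, respectively. -/
theorem stmt14 (p q l : ℕ) (hl : 1 ≤ l) (H0 H1 : Matrix (Fin p) (Fin q) Bool) :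
    (sixCycleCount (scCouple l H0 H1) : ℤ) =
      (l : ℤ) * sixCycleCount (scCouple 1 H0 H1) +
        ((l : ℤ) - 1) * ((sixCycleCount (scCouple 2 H0 H1) : ℤ) -
          2 * sixCycleCount (scCouple 1 H0 H1)) := by
  obtain ⟨k, rfl⟩ : ∃ k, l = k + 1 := ⟨l - 1, by omega⟩
  have hN1 : sixCycleCount (scCouple 1 H0 H1) = (Stmt14Aux.cyc H0 H1 1).card :=
    Stmt14Aux.sixCycleCount_eq H0 H1 1
  have hN2 : sixCycleCount (scCouple 2 H0 H1) =
      ((Stmt14Aux.cyc H0 H1 2).filter fun t => Stmt14Aux.minb t = 0).card + (Stmt14Aux.cyc H0 H1 1).card := by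
    rw [Stmt14Aux.sixCycleCount_eq, Stmt14Aux.card_sum, Finset.sum_range_succ, Finset.sum_range_one]
    congr 1
    rw [Stmt14Aux.fiber_card H0 H1 2 1 (by norm_num),
      show min (2 - 1) 2 = 1 from by norm_num, Stmt14Aux.cyc1_filter]
  have hNl : sixCycleCount (scCouple (k+1) H0 H1) =
      k * ((Stmt14Aux.cyc H0 H1 2).filter fun t => Stmt14Aux.minb t = 0).card + (Stmt14Aux.cyc H0 H1 1).card := by
    rw [Stmt14Aux.sixCycleCount_eq, Stmt14Aux.card_sum, Finset.sum_range_succ]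
    congr 1
    · rw [Finset.sum_congr rfl fun c hc => ?_, Finset.sum_const, Finset.card_range,
        smul_eq_mul]
      rw [Stmt14Aux.fiber_card H0 H1 (k+1) c (by have := Finset.mem_range.mp hc; omega),
        show min ((k+1) - c) 2 = 2 from by have := Finset.mem_range.mp hc; omega]
    · rw [Stmt14Aux.fiber_card H0 H1 (k+1) k (by omega),
        show min ((k+1) - k) 2 = 1 from by omega, Stmt14Aux.cyc1_filter]
  rw [hNl, hN2, hN1]
  push_cast
  ring
end

section
/- For a binary matrix B with 3 rows in which the columns are: κ-ν all-one columns, and ν columns each containing exactly one zero distributed so that row overlaps are t_{12}=κ-2a-b, t_{13}=κ-2a-(b>0), t_{23}=κ-2a-(b>1), and t_{123}=κ-ν (balanced construction with ν=3a+b, 0≤b<3), the number of 6-cycles F(B_B) is given by formula (19) of the paper; for the unbalanced construction (all ν zeros in row 1), F(B_U) = (κ-ν)(κ-ν-1)(κ-2); and F(B_U) ≤ F(B_B). -/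
/-- The 6-cycle count contribution `A(t_{123}, t_{12}, t_{13}, t_{23})` for a triple of
rows, where `[α]⁺ = max α 0`. -/
def cycA (t x y z : ℤ) : ℤ :=
  t * max (t - 1) 0 * max (z - 2) 0 + t * (y - t) * max (z - 1) 0 +
    (x - t) * t * max (z - 1) 0 + (x - t) * (y - t) * z

lemma cycA_eq (t x y z : ℤ) (ht : 1 ≤ t) (hz : 2 ≤ z) :
    cycA t x y z = t * (t - 1) * (z - 2) + t * (y - t) * (z - 1) +
      (x - t) * t * (z - 1) + (x - t) * (y - t) * z := by
  unfold cycA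
  rw [max_eq_left (by omega : (0:ℤ) ≤ t - 1), max_eq_left (by omega : (0:ℤ) ≤ z - 2),
    max_eq_left (by omega : (0:ℤ) ≤ z - 1)]

/-- For a 3-row binary matrix whose `ν = 3a + b` zeros (`0 ≤ b < 3`,
`ν < κ`, no two zeros in a column) are distributed in a balanced way, giving overlaps
`t₁₂ = κ-2a-b`, `t₁₃ = κ-2a-(b>0)`, `t₂₃ = κ-2a-(b>1)`, `t₁₂₃ = κ-ν`, the number of
6-cycles `F(B_B)` is given by formula (19) of the paper; for the unbalanced construction
(all `ν` zeros in row 1, overlaps `t₁₂ = t₁₃ = t₁₂₃ = κ-ν`, `t₂₃ = κ`),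
`F(B_U) = (κ-ν)(κ-ν-1)(κ-2)`; and `F(B_U) ≤ F(B_B)`. -/
theorem stmt15 (κ ν a b : ℤ) (ha : 0 ≤ a) (hb : 0 ≤ b) (hb3 : b < 3)
    (hν : ν = 3 * a + b) (hνκ : ν < κ) :
    cycA (κ - ν) (κ - ν) (κ - ν) κ = (κ - ν) * (κ - ν - 1) * (κ - 2) ∧
    cycA (κ - ν) (κ - 2 * a - b) (κ - 2 * a - (if 0 < b then 1 else 0))
        (κ - 2 * a - (if 1 < b then 1 else 0)) =
      (κ - ν) * (κ - ν - 1) * (κ - 2 * a - (if 1 < b then 1 else 0) - 2) +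
        (κ - ν) * (a + (if 1 < b then 1 else 0)) *
          (κ - 2 * a - (if 1 < b then 1 else 0) - 1) +
        a * (κ - ν) * (κ - 2 * a - (if 1 < b then 1 else 0) - 1) +
        a * (a + (if 1 < b then 1 else 0)) * (κ - 2 * a - (if 1 < b then 1 else 0)) ∧
    cycA (κ - ν) (κ - ν) (κ - ν) κ ≤
      cycA (κ - ν) (κ - 2 * a - b) (κ - 2 * a - (if 0 < b then 1 else 0))
        (κ - 2 * a - (if 1 < b then 1 else 0)) := by
  subst hν
  by_cases hκ1 : κ = 1
  · have ha0 : a = 0 := by omega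
    have hb0 : b = 0 := by omega
    subst hκ1 ha0 hb0
    norm_num [cycA]
  · have hκ2 : 2 ≤ κ := by omega
    have ht : 1 ≤ κ - (3 * a + b) := by omega
    interval_cases b
    · simp only [show ¬(0:ℤ) < 0 by norm_num, show ¬(1:ℤ) < 0 by norm_num, if_false]
      rw [cycA_eq _ _ _ _ ht hκ2, cycA_eq _ _ _ _ ht (by omega), add_zero]
      refine ⟨by ring, by ring, ?_⟩
      nlinarith [mul_nonneg (mul_nonneg ha ha) (by omega : (0:ℤ) ≤ κ - 2*a),
        mul_nonneg (mul_nonneg ha ha) (by omega : (0:ℤ) ≤ κ - 3*a)]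
    · simp only [show (0:ℤ) < 1 by norm_num, show ¬(1:ℤ) < 1 by norm_num, if_true, if_false]
      rw [cycA_eq _ _ _ _ ht hκ2, cycA_eq _ _ _ _ ht (by omega), add_zero]
      refine ⟨by ring, by ring, ?_⟩
      nlinarith [mul_nonneg (mul_nonneg ha ha) (by omega : (0:ℤ) ≤ κ - 2*a),
        mul_nonneg (mul_nonneg ha ha) (by omega : (0:ℤ) ≤ κ - 3*a - 1),
        mul_nonneg ha (by omega : (0:ℤ) ≤ κ - 3*a - 1)]
    · simp only [show (0:ℤ) < 2 by norm_num, show (1:ℤ) < 2 by norm_num, if_true]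
      rw [cycA_eq _ _ _ _ ht hκ2, cycA_eq _ _ _ _ ht (by omega)]
      refine ⟨by ring, by ring, ?_⟩
      nlinarith [mul_nonneg (mul_nonneg ha ha) (by omega : (0:ℤ) ≤ κ - 2*a),
        mul_nonneg (mul_nonneg ha ha) (by omega : (0:ℤ) ≤ κ - 3*a - 2),
        mul_nonneg ha (by omega : (0:ℤ) ≤ κ - 3*a - 2),
        mul_nonneg ha (by omega : (0:ℤ) ≤ κ - 2*a - 1)]
end

section
/- A sequence of positions [i_1,j_1]-[i_1,j_2]-[i_2,j_2]-[i_2,j_3]-[i_3,j_3]-[i_3,j_1] with distinct rows i_1,i_2,i_3 and distinct columns j_1,j_2,j_3 in a protograph B lifted by circulants of size z with power matrix C = [c_{i,j}] yields z cycles of length 6 in the lifted matrix if and only if c_{i1,j1} - c_{i1,j2} + c_{i2,j2} - c_{i2,j3} + c_{i3,j3} - c_{i3,j1} ≡ 0 (mod z), and yields no 6-cycles in the lifted matrix otherwise. -/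
/-!
Along the protograph cycle, each lifted edge forces the copy index to shift by `± c_{i,j}`
modulo `z`. Going once around, the six shifts add up to the alternating sum of the
exponents, so a lifted closed walk exists only if that sum vanishes modulo `z`; when it
does, the walk is determined by the copy `v₁` of the first column node, which is free,
giving exactly `z` lifted cycles.
-/

/-- Adjacency in the circulant lifting of a protograph `B` with power matrix `C` and
circulant size `z`: the copy `u` of check (row) node `i` is connected to the copy `v` of
variable (column) node `j` iff `B i j = 1` and `u ≡ v + c_{i,j} (mod z)`. -/
def liftedAdj {γ κ : ℕ} (z : ℕ) (B : Matrix (Fin γ) (Fin κ) Bool)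
    (C : Matrix (Fin γ) (Fin κ) ℕ) (i : Fin γ) (u : Fin z) (j : Fin κ) (v : Fin z) :
    Prop :=
  B i j = true ∧ ((u : ℕ) : ZMod z) = ((v : ℕ) : ZMod z) + ((C i j : ℕ) : ZMod z)

instance {γ κ z : ℕ} (B : Matrix (Fin γ) (Fin κ) Bool) (C : Matrix (Fin γ) (Fin κ) ℕ)
    (i : Fin γ) (u : Fin z) (j : Fin κ) (v : Fin z) :
    Decidable (liftedAdj z B C i u j v) :=
  inferInstanceAs (Decidable (_ ∧ _))

open Finset

@[simps]
def natCastFinEquivZMod (z : ℕ) [NeZero z] : Fin z ≃ ZMod z where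
  toFun u := ((u : ℕ) : ZMod z)
  invFun a := ⟨a.val, a.val_lt⟩
  left_inv u := Fin.ext (ZMod.val_natCast_of_lt u.isLt)
  right_inv := ZMod.natCast_zmod_val

section Hexagon

variable {G : Type*} [AddCommGroup G] (a₁ a₂ a₃ a₄ a₅ a₆ : G)

/-- `t = ((u₁, u₂, u₃), (v₁, v₂, v₃))` is the closed walk `v₁ u₁ v₂ u₂ v₃ u₃ v₁` whose
`k`-th edge joins its row copy `u` to its column copy `v` by `u = v + aₖ`. -/
def IsHexagonLift (t : (G × G × G) × (G × G × G)) : Prop :=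
  t.1.1 = t.2.1 + a₁ ∧ t.1.1 = t.2.2.1 + a₂ ∧ t.1.2.1 = t.2.2.1 + a₃ ∧
    t.1.2.1 = t.2.2.2 + a₄ ∧ t.1.2.2 = t.2.2.2 + a₅ ∧ t.1.2.2 = t.2.1 + a₆

instance [DecidableEq G] : DecidablePred (IsHexagonLift a₁ a₂ a₃ a₄ a₅ a₆) :=
  fun _ => inferInstanceAs (Decidable (_ ∧ _))

def hexagonLiftFrom (v : G) : (G × G × G) × (G × G × G) :=
  ((v + a₁, v + a₁ - a₂ + a₃, v + a₁ - a₂ + a₃ - a₄ + a₅),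
    (v, v + a₁ - a₂, v + a₁ - a₂ + a₃ - a₄))

variable {a₁ a₂ a₃ a₄ a₅ a₆}

theorem IsHexagonLift.alternating_sum_eq_zero {t : (G × G × G) × (G × G × G)}
    (h : IsHexagonLift a₁ a₂ a₃ a₄ a₅ a₆ t) : a₁ - a₂ + a₃ - a₄ + a₅ - a₆ = 0 := by
  obtain ⟨e₁, e₂, e₃, e₄, e₅, e₆⟩ := h
  linear_combination (norm := module) -e₁ + e₂ - e₃ + e₄ - e₅ + e₆

theorem IsHexagonLift.eq_hexagonLiftFrom {t : (G × G × G) × (G × G × G)}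
    (h : IsHexagonLift a₁ a₂ a₃ a₄ a₅ a₆ t) : hexagonLiftFrom a₁ a₂ a₃ a₄ a₅ t.2.1 = t := by
  obtain ⟨⟨u₁, u₂, u₃⟩, ⟨v₁, v₂, v₃⟩⟩ := t
  obtain ⟨e₁, e₂, e₃, e₄, e₅, -⟩ := h
  simp only [hexagonLiftFrom, Prod.mk.injEq, true_and]
  refine ⟨⟨?_, ?_, ?_⟩, ?_, ?_⟩
  · linear_combination (norm := module) -e₁
  · linear_combination (norm := module) -e₁ + e₂ - e₃
  · linear_combination (norm := module) -e₁ + e₂ - e₃ + e₄ - e₅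
  · linear_combination (norm := module) -e₁ + e₂
  · linear_combination (norm := module) -e₁ + e₂ - e₃ + e₄

theorem isHexagonLift_hexagonLiftFrom (h : a₁ - a₂ + a₃ - a₄ + a₅ - a₆ = 0) (v : G) :
    IsHexagonLift a₁ a₂ a₃ a₄ a₅ a₆ (hexagonLiftFrom a₁ a₂ a₃ a₄ a₅ v) := by
  refine ⟨rfl, ?_, ?_, ?_, ?_, ?_⟩ <;> simp only [hexagonLiftFrom]
  · abel
  · abel
  · linear_combination (norm := module) h

theorem card_filter_isHexagonLift [Fintype G] [DecidableEq G] :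
    #{t | IsHexagonLift a₁ a₂ a₃ a₄ a₅ a₆ t} =
      if a₁ - a₂ + a₃ - a₄ + a₅ - a₆ = 0 then Fintype.card G else 0 := by
  split_ifs with h
  · refine card_nbij' (fun t => t.2.1) (hexagonLiftFrom a₁ a₂ a₃ a₄ a₅)
      (fun _ _ => mem_coe.2 (mem_univ _)) (fun v _ => ?_) (fun t ht => ?_) (fun _ _ => rfl)
    · simpa using isHexagonLift_hexagonLiftFrom h v
    · exact (mem_filter.1 ht).2.eq_hexagonLiftFrom
  · exact card_eq_zero.2 <| filter_eq_empty_iff.2 fun _ _ ht => h ht.alternating_sum_eq_zero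

end Hexagon

theorem stmt17_general (γ κ z : ℕ)
    (B : Matrix (Fin γ) (Fin κ) Bool) (C : Matrix (Fin γ) (Fin κ) ℕ)
    (i1 i2 i3 : Fin γ) (j1 j2 j3 : Fin κ)
    (hB : B i1 j1 = true ∧ B i1 j2 = true ∧ B i2 j2 = true ∧ B i2 j3 = true ∧
      B i3 j3 = true ∧ B i3 j1 = true) :
    (Finset.univ.filter fun t : (Fin z × Fin z × Fin z) × (Fin z × Fin z × Fin z) =>
        liftedAdj z B C i1 t.1.1 j1 t.2.1 ∧ liftedAdj z B C i1 t.1.1 j2 t.2.2.1 ∧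
        liftedAdj z B C i2 t.1.2.1 j2 t.2.2.1 ∧ liftedAdj z B C i2 t.1.2.1 j3 t.2.2.2 ∧
        liftedAdj z B C i3 t.1.2.2 j3 t.2.2.2 ∧ liftedAdj z B C i3 t.1.2.2 j1 t.2.1).card =
      if (z : ℤ) ∣ ((C i1 j1 : ℤ) - C i1 j2 + C i2 j2 - C i2 j3 + C i3 j3 - C i3 j1)
      then z else 0 := by
  obtain rfl | hz := z.eq_zero_or_pos
  · simp
  have : NeZero z := NeZero.of_pos hz
  obtain ⟨h₁, h₂, h₃, h₄, h₅, h₆⟩ := hB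
  let e := natCastFinEquivZMod z
  rw [card_equiv ((e.prodCongr (e.prodCongr e)).prodCongr (e.prodCongr (e.prodCongr e)))
      (t := {t | IsHexagonLift (C i1 j1 : ZMod z) (C i1 j2) (C i2 j2) (C i2 j3) (C i3 j3)
        (C i3 j1) t}) fun t => ?_,
    card_filter_isHexagonLift, ZMod.card]
  · simp only [← ZMod.intCast_zmod_eq_zero_iff_dvd]
    push_cast
    rfl
  · simp only [mem_filter, mem_univ, liftedAdj, h₁, h₂, h₃, h₄, h₅, h₆, true_and]
    rfl

/-- A 6-cycle `[i₁,j₁]-[i₁,j₂]-[i₂,j₂]-[i₂,j₃]-[i₃,j₃]-[i₃,j₁]` of the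
protograph `B` (distinct rows, distinct columns, all six entries equal to 1) yields
exactly `z` cycles of length 6 in the matrix lifted with circulant size `z` and power
matrix `C` if `c_{i₁,j₁} - c_{i₁,j₂} + c_{i₂,j₂} - c_{i₂,j₃} + c_{i₃,j₃} - c_{i₃,j₁} ≡ 0
(mod z)`, and yields no 6-cycles otherwise. -/
theorem stmt17 (γ κ z : ℕ) (hz : 0 < z)
    (B : Matrix (Fin γ) (Fin κ) Bool) (C : Matrix (Fin γ) (Fin κ) ℕ)
    (i1 i2 i3 : Fin γ) (j1 j2 j3 : Fin κ)
    (hi12 : i1 ≠ i2) (hi13 : i1 ≠ i3) (hi23 : i2 ≠ i3)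
    (hj12 : j1 ≠ j2) (hj13 : j1 ≠ j3) (hj23 : j2 ≠ j3)
    (hB : B i1 j1 = true ∧ B i1 j2 = true ∧ B i2 j2 = true ∧ B i2 j3 = true ∧
      B i3 j3 = true ∧ B i3 j1 = true) :
    (Finset.univ.filter fun t : (Fin z × Fin z × Fin z) × (Fin z × Fin z × Fin z) =>
        liftedAdj z B C i1 t.1.1 j1 t.2.1 ∧ liftedAdj z B C i1 t.1.1 j2 t.2.2.1 ∧
        liftedAdj z B C i2 t.1.2.1 j2 t.2.2.1 ∧ liftedAdj z B C i2 t.1.2.1 j3 t.2.2.2 ∧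
        liftedAdj z B C i3 t.1.2.2 j3 t.2.2.2 ∧ liftedAdj z B C i3 t.1.2.2 j1 t.2.1).card =
      if (z : ℤ) ∣ ((C i1 j1 : ℤ) - C i1 j2 + C i2 j2 - C i2 j3 + C i3 j3 - C i3 j1)
      then z else 0 :=
  stmt17_general γ κ z B C i1 i2 i3 j1 j2 j3 hB
end
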